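/- For $p\in[0,1/2]$ set $g_p=p(1-p)/3$ and $z_p=(1-p)/4$. Then the Boltzmann partition function over finite rooted quadrangulations with a boundary, $F(g,z)=\sum_{\mathsf{q}} g^{\#F(\mathsf{q})} z^{\#\partial\mathsf{q}/2}$, satisfies $F(g_p,z_p) = \frac{2}{3}\cdot\frac{3-4p}{1-p}$. -/

import Mathlib

/-!
Write `bₙ = C(2n, n) / 4ⁿ` and `r = (1 - 2p) / (1 - p)`. The `σ`-th term of the series is
`(2 + σ r) b_σ / ((σ + 1)(σ + 2))`, a combination of `b_σ / ((σ + 1)(σ + 2))` and `b_σ / (σ + 1)`.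
Because `b_{n+1} = (2n + 1) / (2n + 2) · bₙ`, both telescope:
`bₙ / (n + 1) = 2bₙ - 2b_{n+1}` and `bₙ / ((n + 1)(n + 2)) = fₙ - f_{n+1}` with
`fₙ = 2bₙ / (3(n + 1))`. Since `(2n + 1) bₙ² ≤ 1`, `bₙ → 0`, so the two series sum to `2` and `2/3`.
-/

open Filter Topology Nat

noncomputable def normalizedCentralBinom (n : ℕ) : ℝ := centralBinom n / 4 ^ n

lemma normalizedCentralBinom_nonneg (n : ℕ) : 0 ≤ normalizedCentralBinom n := by
  unfold normalizedCentralBinom; positivity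

lemma normalizedCentralBinom_zero : normalizedCentralBinom 0 = 1 := by
  simp [normalizedCentralBinom]

lemma normalizedCentralBinom_succ (n : ℕ) :
    normalizedCentralBinom (n + 1) = (2 * n + 1) / (2 * n + 2) * normalizedCentralBinom n := by
  have h : ((n : ℝ) + 1) * centralBinom (n + 1) = 2 * (2 * n + 1) * centralBinom n := by
    exact_mod_cast succ_mul_centralBinom_succ n
  unfold normalizedCentralBinom
  field_simp
  rw [pow_succ]
  linear_combination 2 * 4 ^ n * h

lemma mul_normalizedCentralBinom_sq_le_one (n : ℕ) :
    (2 * n + 1) * normalizedCentralBinom n ^ 2 ≤ 1 := by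
  induction n with
  | zero => simp [normalizedCentralBinom_zero]
  | succ n ih =>
    calc (2 * ((n + 1 : ℕ) : ℝ) + 1) * normalizedCentralBinom (n + 1) ^ 2
        = (2 * (n : ℝ) + 3) * (2 * n + 1) / (2 * n + 2) ^ 2
            * ((2 * n + 1) * normalizedCentralBinom n ^ 2) := by
          rw [normalizedCentralBinom_succ]; push_cast; field_simp; ring
      _ ≤ (2 * (n : ℝ) + 3) * (2 * n + 1) / (2 * n + 2) ^ 2 * 1 := by gcongr
      _ ≤ 1 := by rw [mul_one, div_le_one (by positivity)]; nlinarith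

lemma tendsto_normalizedCentralBinom_atTop : Tendsto normalizedCentralBinom atTop (𝓝 0) := by
  have hsq : Tendsto (fun n => normalizedCentralBinom n ^ 2) atTop (𝓝 0) := by
    refine squeeze_zero (fun n => by positivity) (fun n => ?_)
      tendsto_one_div_add_atTop_nhds_zero_nat
    rw [le_div_iff₀ (by positivity)]
    nlinarith [mul_normalizedCentralBinom_sq_le_one n, sq_nonneg (normalizedCentralBinom n)]
  simpa [Real.sqrt_sq (normalizedCentralBinom_nonneg _)] using hsq.sqrt

lemma hasSum_of_eq_sub_succ {t f : ℕ → ℝ} (ht : ∀ n, 0 ≤ t n)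
    (htf : ∀ n, t n = f n - f (n + 1)) (hf : Tendsto f atTop (𝓝 0)) : HasSum t (f 0) := by
  rw [hasSum_iff_tendsto_nat_of_nonneg ht]
  simp_rw [htf, Finset.sum_range_sub']
  simpa using tendsto_const_nhds.sub hf

lemma hasSum_normalizedCentralBinom_div_succ :
    HasSum (fun n : ℕ => normalizedCentralBinom n / (n + 1)) 2 := by
  have h := hasSum_of_eq_sub_succ (t := fun n : ℕ => normalizedCentralBinom n / (n + 1))
    (f := fun n => 2 * normalizedCentralBinom n)
    (fun n => by have := normalizedCentralBinom_nonneg n; positivity) (fun n => ?_)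
    (by simpa using tendsto_normalizedCentralBinom_atTop.const_mul 2)
  · simpa [normalizedCentralBinom_zero] using h
  · rw [normalizedCentralBinom_succ]; field_simp; ring

lemma hasSum_normalizedCentralBinom_div_succ_mul_add_two :
    HasSum (fun n : ℕ => normalizedCentralBinom n / ((n + 1) * (n + 2))) (2 / 3) := by
  have hf : Tendsto (fun n : ℕ => 2 / 3 * (1 / ((n : ℝ) + 1)) * normalizedCentralBinom n)
      atTop (𝓝 0) := by
    simpa using (tendsto_one_div_add_atTop_nhds_zero_nat.const_mul (2 / 3)).mul
      tendsto_normalizedCentralBinom_atTop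
  have h := hasSum_of_eq_sub_succ
    (t := fun n : ℕ => normalizedCentralBinom n / ((n + 1) * (n + 2)))
    (fun n => by have := normalizedCentralBinom_nonneg n; positivity) (fun n => ?_) hf
  · simpa [normalizedCentralBinom_zero] using h
  · rw [normalizedCentralBinom_succ]; push_cast; field_simp; ring

lemma hasSum_two_add_mul_normalizedCentralBinom_div (r : ℝ) :
    HasSum (fun n : ℕ => (2 + n * r) * normalizedCentralBinom n / ((n + 1) * (n + 2)))
      (2 / 3 * (2 + r)) := by
  have hsplit : (fun n : ℕ => (2 + n * r) * normalizedCentralBinom n / ((n + 1) * (n + 2)))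
      = fun n : ℕ => (2 - 2 * r) * (normalizedCentralBinom n / ((n + 1) * (n + 2)))
          + r * (normalizedCentralBinom n / (n + 1)) := by
    funext n
    field_simp
    ring
  rw [hsplit, show 2 / 3 * (2 + r) = (2 - 2 * r) * (2 / 3) + r * 2 by ring]
  exact (hasSum_normalizedCentralBinom_div_succ_mul_add_two.mul_left _).add
    (hasSum_normalizedCentralBinom_div_succ.mul_left _)

lemma factorial_two_mul_div_factorial_mul_factorial_add_two (n : ℕ) :
    ((2 * n)! : ℝ) / (n ! * (n + 2)!) = centralBinom n / ((n + 1) * (n + 2)) := by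
  rw [centralBinom_eq_two_mul_choose, cast_choose ℝ (by omega), two_mul, Nat.add_sub_cancel]
  push_cast [factorial_succ]
  field_simp
  ring

theorem boltzmann_partition_function_value_general (p : ℝ) (hp : p ≤ 1/2) :
    ∑' σ : ℕ,
        (((2 * σ).factorial : ℝ) / ((σ.factorial : ℝ) * ((σ + 2).factorial : ℝ))
          * (2 + (σ : ℝ) * (1 - 2 * p) / (1 - p)) * (1 / (1 - p)) ^ σ)
        * ((1 - p) / 4) ^ σ
      = (2 / 3) * (3 - 4 * p) / (1 - p) := by
  have hq : 1 - p ≠ 0 := by linarith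
  have hterm : ∀ σ : ℕ,
      (((2 * σ).factorial : ℝ) / ((σ.factorial : ℝ) * ((σ + 2).factorial : ℝ))
          * (2 + (σ : ℝ) * (1 - 2 * p) / (1 - p)) * (1 / (1 - p)) ^ σ) * ((1 - p) / 4) ^ σ
        = (2 + σ * ((1 - 2 * p) / (1 - p))) * normalizedCentralBinom σ / ((σ + 1) * (σ + 2)) := by
    intro σ
    rw [factorial_two_mul_div_factorial_mul_factorial_add_two, normalizedCentralBinom, mul_assoc,
      ← mul_pow, one_div_mul_eq_div, div_div_cancel_left' hq, inv_pow]
    field_simp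
  rw [tsum_congr hterm, (hasSum_two_add_mul_normalizedCentralBinom_div _).tsum_eq]
  field_simp
  ring

/-- For `p ∈ [0,1/2]`, `g_p = p(1-p)/3`, `z_p = (1-p)/4`, the Boltzmann
partition function of quadrangulations with a boundary satisfies
`F(g_p, z_p) = ∑_{σ≥0} F_σ(g_p) z_p^σ = (2/3)·(3-4p)/(1-p)`, where
`F_σ(g_p) = (2σ)!/(σ!(σ+2)!) · (2 + σ(1-2p)/(1-p)) · (1-p)^{-σ}`. -/
theorem boltzmann_partition_function_value (p : ℝ) (hp0 : 0 ≤ p) (hp : p ≤ 1/2) :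
    ∑' σ : ℕ,
        (((2 * σ).factorial : ℝ) / ((σ.factorial : ℝ) * ((σ + 2).factorial : ℝ))
          * (2 + (σ : ℝ) * (1 - 2 * p) / (1 - p)) * (1 / (1 - p)) ^ σ)
        * ((1 - p) / 4) ^ σ
      = (2 / 3) * (3 - 4 * p) / (1 - p) :=
  boltzmann_partition_function_value_general p hp
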